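/- Let D ≥ 2, let n = 2D or n = 2D+1, and let ζ = exp(2πi/n). With E_0,…,E_D the primitive idempotent matrices of the cycle on ZMod n and Q_{h,i,j}(u,v,w) = n · Σ_{x ∈ ZMod n} (E_h)_{u x} (E_i)_{v x} (E_j)_{w x}, the set {Q_{h,i,j} : h,i,j ∈ {0,…,D}, Q_{h,i,j} ≠ 0} is a basis of the ℂ-space Fix(Aut) of Aut(Γ)-invariant functions on (ZMod n)³. Moreover, for all h,i,j ∈ {0,…,D}: A^{(1)} Q_{h,i,j} = (ζ^h + ζ^{-h}) Q_{h,i,j}, A^{(2)} Q_{h,i,j} = (ζ^i + ζ^{-i}) Q_{h,i,j}, and A^{(3)} Q_{h,i,j} = (ζ^j + ζ^{-j}) Q_{h,i,j}. -/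

import Mathlib

/-- Adjacency in the cycle graph on `ZMod n`. -/
def cycAdj (n : ℕ) (x y : ZMod n) : Prop := x - y = 1 ∨ y - x = 1

/-- The automorphism group of the cycle graph on `ZMod n`. -/
def cycAut (n : ℕ) : Subgroup (Equiv.Perm (ZMod n)) where
  carrier := {g | ∀ x y, cycAdj n (g x) (g y) ↔ cycAdj n x y}
  one_mem' := by intro x y; simp
  mul_mem' := by
    intro a b ha hb x y
    simp only [Equiv.Perm.mul_apply]
    exact (ha (b x) (b y)).trans (hb x y)
  inv_mem' := by
    intro a ha x y
    have h := ha (a⁻¹ x) (a⁻¹ y)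
    simpa using h.symm

/-- The subspace `Fix(Aut)` of `Aut(Γ)`-invariant complex functions on triples. -/
noncomputable def fixSubmodule (n : ℕ) : Submodule ℂ ((ZMod n × ZMod n × ZMod n) → ℂ) where
  carrier := {f | ∀ g ∈ cycAut n, ∀ x y z : ZMod n, f (g x, g y, g z) = f (x, y, z)}
  add_mem' := by intro f h hf hh g hg x y z; simp [hf g hg x y z, hh g hg x y z]
  zero_mem' := by intro g hg x y z; rfl
  smul_mem' := by intro c f hf g hg x y z; simp [hf g hg x y z]

/-- The primitive idempotent matrices `E_0, …, E_D` of the cycle on `ZMod n`. -/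
noncomputable def Emat (D n : ℕ) (ζ : ℂ) (j : ℕ) : Matrix (ZMod n) (ZMod n) ℂ :=
  Matrix.of fun x y =>
    if j = 0 then 1 / n
    else if n = 2 * D ∧ j = D then ζ ^ ((x - y).val * D) / n
    else (ζ ^ ((x - y).val * j) + ζ ^ (-(((x - y).val * j : ℕ) : ℤ))) / n

/-- The function `Q_{h,i,j}(u,v,w) = n · Σ_x (E_h)_{ux} (E_i)_{vx} (E_j)_{wx}`. -/
noncomputable def Qfun (D n : ℕ) [NeZero n] (ζ : ℂ) (h i j : ℕ) :
    ZMod n × ZMod n × ZMod n → ℂ := fun t =>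
  n * ∑ x : ZMod n, Emat D n ζ h t.1 x * Emat D n ζ i t.2.1 x * Emat D n ζ j t.2.2 x

/-- The operator `A^{(1)}`. -/
def Aop1 (n : ℕ) (f : ZMod n × ZMod n × ZMod n → ℂ) : ZMod n × ZMod n × ZMod n → ℂ :=
  fun t => f (t.1 - 1, t.2.1, t.2.2) + f (t.1 + 1, t.2.1, t.2.2)

/-- The operator `A^{(2)}`. -/
def Aop2 (n : ℕ) (f : ZMod n × ZMod n × ZMod n → ℂ) : ZMod n × ZMod n × ZMod n → ℂ :=
  fun t => f (t.1, t.2.1 - 1, t.2.2) + f (t.1, t.2.1 + 1, t.2.2)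

/-- The operator `A^{(3)}`. -/
def Aop3 (n : ℕ) (f : ZMod n × ZMod n × ZMod n → ℂ) : ZMod n × ZMod n × ZMod n → ℂ :=
  fun t => f (t.1, t.2.1, t.2.2 - 1) + f (t.1, t.2.1, t.2.2 + 1)

/-!
Fix a primitive additive character `ψ` of `ZMod n` with `ψ 1 = ζ` and expand functions on
`(ZMod n)³` in the characters `χ_p(t) = ψ(p₁t₁ + p₂t₂ + p₃t₃)`. Since `Q_{h,i,j}` is the
convolution `n Σ_x e_h(u-x) e_i(v-x) e_j(w-x)` of the columns `e_j = E_j(·, 0)`, and the Fourier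
transform of `e_j` is the indicator of `{j, -j}`, the coefficient of `Q_{h,i,j}` at `p` is `n²`
when `p₁ + p₂ + p₃ = 0` and `(|p₁|, |p₂|, |p₃|) = (h, i, j)` (`|·|` the distance to `0` in
`ZMod n`), and `0` otherwise.

Everything is read off from this. The automorphisms of the cycle are `x ↦ ±x + c`, so `f` is
invariant iff its coefficients live on `p₁ + p₂ + p₃ = 0` and are even in `p`. The supports of the
`Q`'s are pairwise disjoint, which gives independence. An invariant `f` is a combination of the
`χ_p + χ_{-p}` with `p₁ + p₂ + p₃ = 0`, and each of these is a multiple of `Q_{|p₁|,|p₂|,|p₃|}`,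
because a sign change of the coordinates of such a `p` that keeps the sum zero gives `±p`.
Finally, shifting the first coordinate by `±1` multiplies the coefficient at `p` by
`ψ(p₁) + ψ(-p₁)`, which equals `ζ^h + ζ^{-h}` on the support of `Q_{h,i,j}`.
-/

lemma sum_prod_prod_mul_mul {α M : Type*} [Fintype α] [CommSemiring M] (a b c : α → M) :
    ∑ t : α × α × α, a t.1 * b t.2.1 * c t.2.2 = (∑ x, a x) * (∑ y, b y) * ∑ z, c z := by
  simp only [Fintype.sum_prod_type, mul_assoc, ← Finset.mul_sum, ← Finset.sum_mul]

section TripleFourier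

variable {R : Type*} [CommRing R]

def tripleDot (p t : R × R × R) : R := p.1 * t.1 + p.2.1 * t.2.1 + p.2.2 * t.2.2

def tripleChar (ψ : AddChar R ℂ) (p t : R × R × R) : ℂ := ψ (tripleDot p t)

lemma tripleDot_neg_right (p t : R × R × R) : tripleDot p (-t) = -tripleDot p t := by
  simp only [tripleDot, Prod.fst_neg, Prod.snd_neg]; ring

lemma tripleDot_diag (p : R × R × R) (s : R) :
    tripleDot p (s, s, s) = (p.1 + p.2.1 + p.2.2) * s := by
  simp only [tripleDot]; ring

lemma eq_or_eq_neg_of_sum_eq_zero {p q : R × R × R}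
    (hp : p.1 + p.2.1 + p.2.2 = 0) (hq : q.1 + q.2.1 + q.2.2 = 0) (h1 : q.1 = p.1 ∨ q.1 = -p.1)
    (h2 : q.2.1 = p.2.1 ∨ q.2.1 = -p.2.1) (h3 : q.2.2 = p.2.2 ∨ q.2.2 = -p.2.2) :
    q = p ∨ q = -p := by
  obtain ⟨a, b, c⟩ := p
  obtain ⟨x, y, z⟩ := q
  dsimp only at *
  rcases h1 with rfl | rfl <;> rcases h2 with rfl | rfl <;> rcases h3 with rfl | rfl <;>
    simp only [Prod.neg_mk, Prod.mk.injEq, true_and, and_true] <;> grind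

variable [Fintype R]

def tripleCoeff (ψ : AddChar R ℂ) (p : R × R × R) : (R × R × R → ℂ) →ₗ[ℂ] ℂ where
  toFun f := ∑ t, f t * ψ (-tripleDot p t)
  map_add' f g := by simp only [Pi.add_apply, add_mul, Finset.sum_add_distrib]
  map_smul' c f := by
    simp only [Pi.smul_apply, smul_eq_mul, mul_assoc, Finset.mul_sum, RingHom.id_apply]

def charCoeff (ψ : AddChar R ℂ) (k : R) (a : R → ℂ) : ℂ := ∑ x, a x * ψ (-(k * x))

def tripleConv (a b c : R → ℂ) (t : R × R × R) : ℂ :=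
  ∑ x, a (t.1 - x) * b (t.2.1 - x) * c (t.2.2 - x)

variable {ψ : AddChar R ℂ}

lemma tripleCoeff_apply (p : R × R × R) (f : R × R × R → ℂ) :
    tripleCoeff ψ p f = ∑ t, f t * ψ (-tripleDot p t) := rfl

lemma tripleCoeff_comp_add_right (p s : R × R × R) (f : R × R × R → ℂ) :
    tripleCoeff ψ p (fun t => f (t + s)) = ψ (tripleDot p s) * tripleCoeff ψ p f := by
  simp only [tripleCoeff_apply, Finset.mul_sum]
  refine Fintype.sum_equiv (Equiv.addRight s) _ _ fun t => ?_
  rw [Equiv.coe_addRight, mul_left_comm, ← AddChar.map_add_eq_mul]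
  congr 2
  simp only [tripleDot, Prod.fst_add, Prod.snd_add]
  ring

lemma tripleCoeff_comp_neg (p : R × R × R) (f : R × R × R → ℂ) :
    tripleCoeff ψ p (fun t => f (-t)) = tripleCoeff ψ (-p) f := by
  simp only [tripleCoeff_apply]
  refine Fintype.sum_equiv (Equiv.neg _) _ _ fun t => ?_
  simp only [Equiv.neg_apply, tripleDot, Prod.fst_neg, Prod.snd_neg]
  ring_nf

variable [DecidableEq R]

theorem sum_addChar_mul_neg (hψ : ψ.IsPrimitive) (m k : R) :
    ∑ x, ψ (m * x) * ψ (-(k * x)) = if m = k then (Fintype.card R : ℂ) else 0 := by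
  have h : ∀ x, ψ (m * x) * ψ (-(k * x)) = ψ (x * (m - k)) := fun x => by
    rw [← AddChar.map_add_eq_mul]; ring_nf
  simp only [h, AddChar.sum_mulShift _ hψ, sub_eq_zero, Nat.cast_ite, Nat.cast_zero]

theorem sum_tripleChar (hψ : ψ.IsPrimitive) (p : R × R × R) :
    ∑ t, tripleChar ψ p t = if p = 0 then (Fintype.card R : ℂ) ^ 3 else 0 := by
  calc ∑ t, tripleChar ψ p t
      = ∑ t : R × R × R, ψ (t.1 * p.1) * ψ (t.2.1 * p.2.1) * ψ (t.2.2 * p.2.2) := by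
        refine Finset.sum_congr rfl fun t _ => ?_
        rw [tripleChar, tripleDot, AddChar.map_add_eq_mul, AddChar.map_add_eq_mul, mul_comm p.1,
          mul_comm p.2.1, mul_comm p.2.2]
    _ = (∑ x, ψ (x * p.1)) * (∑ y, ψ (y * p.2.1)) * ∑ z, ψ (z * p.2.2) :=
        sum_prod_prod_mul_mul (fun x => ψ (x * p.1)) (fun y => ψ (y * p.2.1))
          (fun z => ψ (z * p.2.2))
    _ = _ := by
        simp only [AddChar.sum_mulShift _ hψ, Nat.cast_ite, Nat.cast_zero, ite_zero_mul_ite_zero,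
          Prod.ext_iff, Prod.fst_zero, Prod.snd_zero, pow_three, and_assoc, mul_assoc]

theorem tripleCoeff_tripleChar (hψ : ψ.IsPrimitive) (p q : R × R × R) :
    tripleCoeff ψ p (tripleChar ψ q) = if q = p then (Fintype.card R : ℂ) ^ 3 else 0 := by
  have h : ∀ t, tripleChar ψ q t * ψ (-tripleDot p t) = tripleChar ψ (q - p) t := fun t => by
    rw [tripleChar, tripleChar, ← AddChar.map_add_eq_mul]
    congr 1
    simp only [tripleDot, Prod.fst_sub, Prod.snd_sub]
    ring
  simp only [tripleCoeff_apply, h, sum_tripleChar hψ, sub_eq_zero]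

theorem sum_tripleCoeff_smul_tripleChar (hψ : ψ.IsPrimitive) (f : R × R × R → ℂ) :
    ∑ p, tripleCoeff ψ p f • tripleChar ψ p = (Fintype.card R : ℂ) ^ 3 • f := by
  ext s
  simp only [Finset.sum_apply, Pi.smul_apply, smul_eq_mul, tripleCoeff_apply, Finset.sum_mul,
    mul_assoc]
  have h : ∀ p t, ψ (-tripleDot p t) * tripleChar ψ p s = tripleChar ψ (s - t) p := by
    intro p t
    rw [tripleChar, tripleChar, ← AddChar.map_add_eq_mul]
    congr 1
    simp only [tripleDot, Prod.fst_sub, Prod.snd_sub]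
    ring
  rw [Finset.sum_comm]
  simp only [h, ← Finset.mul_sum, sum_tripleChar hψ, sub_eq_zero, mul_ite, mul_zero,
    Finset.sum_ite_eq, Finset.mem_univ, if_true, mul_comm]

theorem tripleCoeff_injective (hψ : ψ.IsPrimitive) {f g : R × R × R → ℂ}
    (h : ∀ p, tripleCoeff ψ p f = tripleCoeff ψ p g) : f = g := by
  have hcard : (Fintype.card R : ℂ) ^ 3 ≠ 0 := by simp [Fintype.card_ne_zero]
  rw [← smul_right_injective _ hcard |>.eq_iff, ← sum_tripleCoeff_smul_tripleChar hψ,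
    ← sum_tripleCoeff_smul_tripleChar hψ]
  simp only [h]

theorem forall_add_diag_eq_iff (hψ : ψ.IsPrimitive) (f : R × R × R → ℂ) :
    (∀ s t, f (t + (s, s, s)) = f t) ↔
      ∀ p, tripleCoeff ψ p f ≠ 0 → p.1 + p.2.1 + p.2.2 = 0 := by
  constructor
  · intro hf p hp
    by_contra hσ
    obtain ⟨s, hs⟩ := AddChar.ne_one_iff.mp (hψ hσ)
    have h := tripleCoeff_comp_add_right (ψ := ψ) p (s, s, s) f
    rw [funext (hf s), tripleDot_diag] at h
    exact hs ((mul_eq_right₀ hp).mp h.symm)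
  · intro hf s t
    suffices h : (fun t => f (t + (s, s, s))) = f from congrFun h t
    refine tripleCoeff_injective hψ fun p => ?_
    rw [tripleCoeff_comp_add_right, tripleDot_diag]
    by_cases hp : tripleCoeff ψ p f = 0
    · rw [hp, mul_zero]
    · rw [hf p hp, zero_mul, AddChar.map_zero_eq_one, one_mul]

theorem forall_neg_eq_iff (hψ : ψ.IsPrimitive) (f : R × R × R → ℂ) :
    (∀ t, f (-t) = f t) ↔ ∀ p, tripleCoeff ψ (-p) f = tripleCoeff ψ p f := by
  constructor
  · intro hf p
    rw [← tripleCoeff_comp_neg]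
    simp only [hf]
  · intro hf
    rw [← funext_iff]
    refine tripleCoeff_injective hψ fun p => ?_
    rw [tripleCoeff_comp_neg, hf]

theorem shift_add_shift_eq_smul (hψ : ψ.IsPrimitive) (f : R × R × R → ℂ) (d : R × R × R) (m : R)
    (hf : ∀ p, tripleCoeff ψ p f ≠ 0 → tripleDot p d = m ∨ tripleDot p d = -m) :
    (fun t => f (t - d) + f (t + d)) = (ψ m + ψ (-m)) • f := by
  refine tripleCoeff_injective hψ fun p => ?_
  have hsum : (fun t => f (t - d) + f (t + d)) = (fun t => f (t + -d)) + (fun t => f (t + d)) := by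
    simp only [sub_eq_add_neg]; rfl
  rw [hsum, map_add, map_smul, tripleCoeff_comp_add_right, tripleCoeff_comp_add_right, smul_eq_mul,
    ← add_mul]
  by_cases hp : tripleCoeff ψ p f = 0
  · rw [hp, mul_zero, mul_zero]
  · rcases hf p hp with h | h <;> simp only [tripleDot_neg_right, h, neg_neg, add_comm]

theorem tripleCoeff_tripleConv (hψ : ψ.IsPrimitive) (a b c : R → ℂ) (p : R × R × R) :
    tripleCoeff ψ p (tripleConv a b c)
      = (if p.1 + p.2.1 + p.2.2 = 0 then (Fintype.card R : ℂ) else 0)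
          * (charCoeff ψ p.1 a * charCoeff ψ p.2.1 b * charCoeff ψ p.2.2 c) := by
  set g : R × R × R → ℂ := fun t => a t.1 * b t.2.1 * c t.2.2
  have hconv : tripleConv a b c = ∑ x : R, fun t => g (t + (-x, -x, -x)) := by
    ext t
    simp only [tripleConv, Finset.sum_apply, g, Prod.fst_add, Prod.snd_add, sub_eq_add_neg]
  have hg : tripleCoeff ψ p g = charCoeff ψ p.1 a * charCoeff ψ p.2.1 b * charCoeff ψ p.2.2 c := by
    rw [tripleCoeff_apply, charCoeff, charCoeff, charCoeff, ← sum_prod_prod_mul_mul]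
    refine Finset.sum_congr rfl fun t _ => ?_
    simp only [g, tripleDot, neg_add, AddChar.map_add_eq_mul]
    ring
  have hσ : ∀ x : R, ψ ((p.1 + p.2.1 + p.2.2) * -x) = ψ (x * -(p.1 + p.2.1 + p.2.2)) := fun x => by
    ring_nf
  rw [hconv, map_sum]
  simp only [tripleCoeff_comp_add_right, hg, ← Finset.sum_mul, tripleDot_diag, hσ,
    AddChar.sum_mulShift _ hψ, neg_eq_zero, Nat.cast_ite, Nat.cast_zero]

end TripleFourier

section Cycle

variable {n : ℕ}

lemma addChar_one_zpow (ψ : AddChar (ZMod n) ℂ) (m : ℤ) : ψ 1 ^ m = ψ m := by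
  rw [← AddChar.map_zsmul_eq_zpow, zsmul_one]

lemma natAbs_valMinAbs_eq_iff {k : ZMod n} {h : ℕ} (hh : h ≤ n / 2) :
    k.valMinAbs.natAbs = h ↔ k = h ∨ k = -h := by
  rw [← ZMod.natAbs_valMinAbs_eq_natAbs_valMinAbs, ZMod.valMinAbs_natCast_of_le_half hh,
    Int.natAbs_natCast]

variable [NeZero n]

lemma natAbs_valMinAbs_le_of_le {D : ℕ} (hn : n ≤ 2 * D + 1) (a : ZMod n) :
    a.valMinAbs.natAbs ≤ D :=
  (ZMod.natAbs_valMinAbs_le a).trans (by omega)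

lemma addChar_one_pow_val_mul (ψ : AddChar (ZMod n) ℂ) (a : ZMod n) (m : ℕ) :
    ψ 1 ^ (a.val * m) = ψ (m * a) := by
  rw [← zpow_natCast, addChar_one_zpow]
  push_cast
  rw [ZMod.natCast_zmod_val, mul_comm]

lemma addChar_one_zpow_neg_val_mul (ψ : AddChar (ZMod n) ℂ) (a : ZMod n) (m : ℕ) :
    ψ 1 ^ (-((a.val * m : ℕ) : ℤ)) = ψ (-(m * a)) := by
  rw [addChar_one_zpow]
  push_cast
  rw [ZMod.natCast_zmod_val, mul_comm]

theorem charCoeff_Emat {ψ : AddChar (ZMod n) ℂ} (hψ : ψ.IsPrimitive) {D j : ℕ}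
    (hn : n = 2 * D ∨ n = 2 * D + 1) (hj : j ≤ D) (k : ZMod n) :
    charCoeff ψ k (fun a => Emat D n (ψ 1) j a 0) = if k.valMinAbs.natAbs = j then 1 else 0 := by
  have hnC : (n : ℂ) ≠ 0 := NeZero.ne _
  have horth := sum_addChar_mul_neg hψ
  rw [ZMod.card] at horth
  simp only [natAbs_valMinAbs_eq_iff (show j ≤ n / 2 by omega)]
  by_cases h0 : j = 0
  · subst h0
    have hE : ∀ a : ZMod n, Emat D n (ψ 1) 0 a 0 = ψ (0 * a) / n := fun a => by
      simp [Emat]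
    simp only [charCoeff, hE, div_mul_eq_mul_div, ← Finset.sum_div, horth, Nat.cast_zero,
      neg_zero, or_self]
    by_cases hk : k = 0 <;> simp [hk, eq_comm (a := (0 : ZMod n)), hnC]
  by_cases hD : n = 2 * D ∧ j = D
  · have hneg : -(j : ZMod n) = j := by
      have h2j : ((2 * j : ℕ) : ZMod n) = 0 := by rw [hD.2, ← hD.1, ZMod.natCast_self]
      push_cast at h2j
      rw [neg_eq_iff_add_eq_zero, ← two_mul, h2j]
    have hE : ∀ a : ZMod n, Emat D n (ψ 1) j a 0 = ψ (j * a) / n := fun a => by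
      rw [Emat, Matrix.of_apply, if_neg h0, if_pos hD, sub_zero, addChar_one_pow_val_mul, hD.2]
    simp only [charCoeff, hE, div_mul_eq_mul_div, ← Finset.sum_div, horth, hneg, or_self]
    by_cases hk : k = j <;> simp [hk, eq_comm (a := (j : ZMod n))]
  · have hne : (j : ZMod n) ≠ -j := by
      intro h
      have h2 : ((2 * j : ℕ) : ZMod n) = 0 := by push_cast; linear_combination h
      rw [ZMod.natCast_eq_zero_iff] at h2
      have := Nat.le_of_dvd (by omega) h2
      omega
    have hE : ∀ a : ZMod n, Emat D n (ψ 1) j a 0 = (ψ (j * a) + ψ (-j * a)) / n := fun a => by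
      rw [Emat, Matrix.of_apply, if_neg h0, if_neg hD, sub_zero, addChar_one_pow_val_mul,
        addChar_one_zpow_neg_val_mul, neg_mul]
    simp only [charCoeff, hE, div_mul_eq_mul_div, ← Finset.sum_div, add_mul,
      Finset.sum_add_distrib, horth]
    by_cases hk : k = j
    · simp [hk, hne.symm, hnC]
    by_cases hk' : k = -j
    · simp [hk', hne, hnC]
    · simp [hk, hk', eq_comm (b := k)]

lemma Qfun_eq_smul_tripleConv (D : ℕ) (ζ : ℂ) (h i j : ℕ) :
    Qfun D n ζ h i j
      = (n : ℂ) • tripleConv (Emat D n ζ h · 0) (Emat D n ζ i · 0) (Emat D n ζ j · 0) := by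
  ext t
  simp only [Qfun, tripleConv, Emat, Matrix.of_apply, sub_zero, Pi.smul_apply, smul_eq_mul]

theorem tripleCoeff_Qfun {ψ : AddChar (ZMod n) ℂ} (hψ : ψ.IsPrimitive) {D h i j : ℕ}
    (hn : n = 2 * D ∨ n = 2 * D + 1) (hh : h ≤ D) (hi : i ≤ D) (hj : j ≤ D)
    (p : ZMod n × ZMod n × ZMod n) :
    tripleCoeff ψ p (Qfun D n (ψ 1) h i j)
      = if p.1 + p.2.1 + p.2.2 = 0 ∧ p.1.valMinAbs.natAbs = h ∧ p.2.1.valMinAbs.natAbs = i ∧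
          p.2.2.valMinAbs.natAbs = j then (n : ℂ) ^ 2 else 0 := by
  rw [Qfun_eq_smul_tripleConv, map_smul, tripleCoeff_tripleConv hψ, charCoeff_Emat hψ hn hh,
    charCoeff_Emat hψ hn hi, charCoeff_Emat hψ hn hj, ZMod.card, smul_eq_mul]
  split_ifs <;> simp_all [sq]

end Cycle

section Automorphisms

variable {n : ℕ}

lemma addRight_mem_cycAut (c : ZMod n) : Equiv.addRight c ∈ cycAut n := by
  intro x y
  simp only [cycAdj, Equiv.coe_addRight, add_sub_add_right_eq_sub]

lemma neg_mem_cycAut : Equiv.neg (ZMod n) ∈ cycAut n := by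
  intro x y
  simp only [cycAdj, Equiv.neg_apply, neg_sub_neg]
  exact or_comm

theorem eq_add_or_eq_neg_add_of_mem_cycAut [NeZero n] (h2 : (2 : ZMod n) ≠ 0)
    {g : Equiv.Perm (ZMod n)} (hg : g ∈ cycAut n) :
    (∀ x, g x = x + g 0) ∨ (∀ x, g x = -x + g 0) := by
  have hstep : ∀ x, g (x + 1) - g x = 1 ∨ g (x + 1) - g x = -1 := fun x => by
    rcases (hg x (x + 1)).2 (Or.inr (by ring)) with h | h
    · exact Or.inr (by linear_combination -h)
    · exact Or.inl h
  have hconst : ∀ x, g (x + 1 + 1) - g (x + 1) = g (x + 1) - g x := fun x => by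
    have hne : g (x + 1 + 1) ≠ g x := fun h => h2 (by linear_combination g.injective h)
    rcases hstep x with h | h <;> rcases hstep (x + 1) with h' | h'
    · linear_combination h' - h
    · exact absurd (by linear_combination h + h') hne
    · exact absurd (by linear_combination h + h') hne
    · linear_combination h' - h
  have hδ : ∀ k : ℕ, g (k + 1) - g k = g 1 - g 0 := by
    intro k
    induction k with
    | zero => simp
    | succ k ih => push_cast; rw [hconst, ih]
  have hlin : ∀ x, g x = x * (g 1 - g 0) + g 0 := by
    suffices h : ∀ k : ℕ, g k = k * (g 1 - g 0) + g 0 from fun x => by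
      simpa only [ZMod.natCast_zmod_val] using h x.val
    intro k
    induction k with
    | zero => simp
    | succ k ih => push_cast; linear_combination hδ k + ih
  rcases hstep 0 with h | h <;> rw [zero_add] at h
  · exact Or.inl fun x => by rw [hlin x, h, mul_one]
  · exact Or.inr fun x => by rw [hlin x, h, mul_neg_one]

theorem mem_fixSubmodule_iff [NeZero n] (h2 : (2 : ZMod n) ≠ 0)
    (f : ZMod n × ZMod n × ZMod n → ℂ) :
    f ∈ fixSubmodule n ↔ (∀ s t, f (t + (s, s, s)) = f t) ∧ ∀ t, f (-t) = f t := by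
  constructor
  · intro hf
    exact ⟨fun s t => hf _ (addRight_mem_cycAut s) t.1 t.2.1 t.2.2,
      fun t => hf _ neg_mem_cycAut t.1 t.2.1 t.2.2⟩
  · rintro ⟨hdiag, hneg⟩ g hg x y z
    rcases eq_add_or_eq_neg_add_of_mem_cycAut h2 hg with h | h <;> rw [h x, h y, h z]
    · exact hdiag (g 0) (x, y, z)
    · exact (hdiag (g 0) (-x, -y, -z)).trans (hneg (x, y, z))

end Automorphisms

section QBasis

variable {n : ℕ} [NeZero n] {ψ : AddChar (ZMod n) ℂ} {D : ℕ}

def nonzeroQfuns (D n : ℕ) [NeZero n] (ζ : ℂ) : Set (ZMod n × ZMod n × ZMod n → ℂ) :=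
  {f | (∃ h i j : ℕ, h ≤ D ∧ i ≤ D ∧ j ≤ D ∧ f = Qfun D n ζ h i j) ∧ f ≠ 0}

theorem tripleCoeff_Qfun_ne_zero_iff (hψ : ψ.IsPrimitive) (hn : n = 2 * D ∨ n = 2 * D + 1)
    {h i j : ℕ} (hh : h ≤ D) (hi : i ≤ D) (hj : j ≤ D) (p : ZMod n × ZMod n × ZMod n) :
    tripleCoeff ψ p (Qfun D n (ψ 1) h i j) ≠ 0 ↔ p.1 + p.2.1 + p.2.2 = 0 ∧
      p.1.valMinAbs.natAbs = h ∧ p.2.1.valMinAbs.natAbs = i ∧ p.2.2.valMinAbs.natAbs = j := by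
  rw [tripleCoeff_Qfun hψ hn hh hi hj, ite_ne_right_iff]
  simp [NeZero.ne]

theorem Qfun_mem_fixSubmodule (hψ : ψ.IsPrimitive) (hn : n = 2 * D ∨ n = 2 * D + 1)
    (h2 : (2 : ZMod n) ≠ 0) {h i j : ℕ} (hh : h ≤ D) (hi : i ≤ D) (hj : j ≤ D) :
    Qfun D n (ψ 1) h i j ∈ fixSubmodule n := by
  rw [mem_fixSubmodule_iff h2, forall_add_diag_eq_iff hψ, forall_neg_eq_iff hψ]
  refine ⟨fun p hp => ((tripleCoeff_Qfun_ne_zero_iff hψ hn hh hi hj p).mp hp).1, fun p => ?_⟩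
  have hσ : -p.1 + -p.2.1 + -p.2.2 = -(p.1 + p.2.1 + p.2.2) := by ring
  simp only [tripleCoeff_Qfun hψ hn hh hi hj, hσ, neg_eq_zero, Prod.fst_neg, Prod.snd_neg,
    ZMod.natAbs_valMinAbs_neg]

theorem linearIndependent_nonzeroQfuns (hψ : ψ.IsPrimitive) (hn : n = 2 * D ∨ n = 2 * D + 1) :
    LinearIndependent ℂ (fun f : nonzeroQfuns D n (ψ 1) => (f : ZMod n × ZMod n × ZMod n → ℂ)) := by
  have hsupp : ∀ f : nonzeroQfuns D n (ψ 1), ∃ p, tripleCoeff ψ p f ≠ 0 := fun f => by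
    by_contra! h
    exact f.2.2 (tripleCoeff_injective hψ fun p => by rw [h p, map_zero])
  choose p hp using hsupp
  refine .of_pairwise_dual_eq_zero_one _ (fun f => (tripleCoeff ψ (p f) f)⁻¹ • tripleCoeff ψ (p f))
    (fun f g hfg => ?_) fun f => inv_mul_cancel₀ (hp f)
  simp only [LinearMap.smul_apply, smul_eq_mul, mul_eq_zero]
  refine .inr (by_contra fun hg => hfg (Subtype.ext ?_))
  obtain ⟨⟨h, i, j, hh, hi, hj, hf⟩, -⟩ := f.2
  obtain ⟨⟨h', i', j', hh', hi', hj', hg'⟩, -⟩ := g.2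
  have hpf := hp f
  rw [hf, tripleCoeff_Qfun_ne_zero_iff hψ hn hh hi hj] at hpf
  rw [← ne_eq, hg', tripleCoeff_Qfun_ne_zero_iff hψ hn hh' hi' hj'] at hg
  rw [hf, hg']
  obtain ⟨-, rfl, rfl, rfl⟩ := hpf
  obtain ⟨-, rfl, rfl, rfl⟩ := hg
  rfl

theorem add_tripleChar_neg_eq_smul_Qfun (hψ : ψ.IsPrimitive) (hn : n = 2 * D ∨ n = 2 * D + 1)
    {p : ZMod n × ZMod n × ZMod n} (hp : p.1 + p.2.1 + p.2.2 = 0) :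
    tripleChar ψ p + tripleChar ψ (-p) = ((if p = -p then 2 else 1) * n : ℂ) •
      Qfun D n (ψ 1) p.1.valMinAbs.natAbs p.2.1.valMinAbs.natAbs p.2.2.valMinAbs.natAbs := by
  have hD := natAbs_valMinAbs_le_of_le (n := n) (D := D) (by omega)
  refine tripleCoeff_injective hψ fun q => ?_
  have hq : (q.1 + q.2.1 + q.2.2 = 0 ∧ q.1.valMinAbs.natAbs = p.1.valMinAbs.natAbs ∧
      q.2.1.valMinAbs.natAbs = p.2.1.valMinAbs.natAbs ∧
      q.2.2.valMinAbs.natAbs = p.2.2.valMinAbs.natAbs) ↔ q = p ∨ q = -p := by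
    simp only [ZMod.natAbs_valMinAbs_eq_natAbs_valMinAbs]
    constructor
    · rintro ⟨hq, h1, h2, h3⟩
      exact eq_or_eq_neg_of_sum_eq_zero hp hq h1 h2 h3
    · rintro (rfl | rfl)
      · simp [hp]
      · simp only [Prod.fst_neg, Prod.snd_neg, or_true, and_true]
        linear_combination -hp
  rw [map_add, map_smul, tripleCoeff_tripleChar hψ, tripleCoeff_tripleChar hψ,
    tripleCoeff_Qfun hψ hn (hD _) (hD _) (hD _), ZMod.card, smul_eq_mul]
  simp only [hq]
  split_ifs <;> grind

theorem fixSubmodule_le_span_nonzeroQfuns (hψ : ψ.IsPrimitive)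
    (hn : n = 2 * D ∨ n = 2 * D + 1) (h2 : (2 : ZMod n) ≠ 0) :
    fixSubmodule n ≤ Submodule.span ℂ (nonzeroQfuns D n (ψ 1)) := by
  intro f hf
  obtain ⟨hdiag, hneg⟩ := (mem_fixSubmodule_iff h2 f).mp hf
  have hsupp := (forall_add_diag_eq_iff hψ f).mp hdiag
  have heven := (forall_neg_eq_iff hψ f).mp hneg
  have hnC : (Fintype.card (ZMod n) : ℂ) ^ 3 ≠ 0 := by simp [NeZero.ne]
  have hflip : ∑ p, (tripleCoeff ψ p f / 2) • tripleChar ψ (-p)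
      = ∑ p, (tripleCoeff ψ p f / 2) • tripleChar ψ p :=
    Fintype.sum_equiv (Equiv.neg _) _ _ fun p => by rw [Equiv.neg_apply, heven]
  have hsym : ∑ p, (tripleCoeff ψ p f / 2) • (tripleChar ψ p + tripleChar ψ (-p))
      = ∑ p, tripleCoeff ψ p f • tripleChar ψ p := by
    rw [Finset.sum_congr rfl fun p _ => smul_add _ _ _, Finset.sum_add_distrib, hflip,
      ← Finset.sum_add_distrib]
    simp only [← add_smul, add_halves]
  rw [← Submodule.smul_mem_iff _ hnC, ← sum_tripleCoeff_smul_tripleChar hψ, ← hsym]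
  refine Submodule.sum_mem _ fun p _ => ?_
  by_cases hp : tripleCoeff ψ p f = 0
  · simp [hp]
  have hD := natAbs_valMinAbs_le_of_le (n := n) (D := D) (by omega)
  rw [add_tripleChar_neg_eq_smul_Qfun hψ hn (hsupp p hp), smul_smul]
  refine Submodule.smul_mem _ _
    (Submodule.subset_span ⟨⟨_, _, _, hD _, hD _, hD _, rfl⟩, fun h0 => ?_⟩)
  exact (tripleCoeff_Qfun_ne_zero_iff hψ hn (hD _) (hD _) (hD _) p).mpr
    ⟨hsupp p hp, rfl, rfl, rfl⟩ (by rw [h0, map_zero])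

theorem span_nonzeroQfuns (hψ : ψ.IsPrimitive) (hn : n = 2 * D ∨ n = 2 * D + 1)
    (h2 : (2 : ZMod n) ≠ 0) : Submodule.span ℂ (nonzeroQfuns D n (ψ 1)) = fixSubmodule n := by
  refine le_antisymm (Submodule.span_le.mpr ?_) (fixSubmodule_le_span_nonzeroQfuns hψ hn h2)
  rintro f ⟨⟨h, i, j, hh, hi, hj, rfl⟩, -⟩
  exact Qfun_mem_fixSubmodule hψ hn h2 hh hi hj

theorem Aop_Qfun_eq_smul (hψ : ψ.IsPrimitive) (hn : n = 2 * D ∨ n = 2 * D + 1) {h i j : ℕ}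
    (hh : h ≤ D) (hi : i ≤ D) (hj : j ≤ D) :
    Aop1 n (Qfun D n (ψ 1) h i j) = (ψ 1 ^ (h : ℤ) + ψ 1 ^ (-(h : ℤ))) • Qfun D n (ψ 1) h i j ∧
    Aop2 n (Qfun D n (ψ 1) h i j) = (ψ 1 ^ (i : ℤ) + ψ 1 ^ (-(i : ℤ))) • Qfun D n (ψ 1) h i j ∧
    Aop3 n (Qfun D n (ψ 1) h i j) = (ψ 1 ^ (j : ℤ) + ψ 1 ^ (-(j : ℤ))) • Qfun D n (ψ 1) h i j := by
  have hD : D ≤ n / 2 := by omega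
  have hsign : ∀ p, tripleCoeff ψ p (Qfun D n (ψ 1) h i j) ≠ 0 →
      (p.1 = h ∨ p.1 = -h) ∧ (p.2.1 = i ∨ p.2.1 = -i) ∧ (p.2.2 = j ∨ p.2.2 = -j) := by
    intro p hp
    obtain ⟨-, h1, h2, h3⟩ := (tripleCoeff_Qfun_ne_zero_iff hψ hn hh hi hj p).mp hp
    exact ⟨(natAbs_valMinAbs_eq_iff (hh.trans hD)).mp h1,
      (natAbs_valMinAbs_eq_iff (hi.trans hD)).mp h2, (natAbs_valMinAbs_eq_iff (hj.trans hD)).mp h3⟩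
  have heig : ∀ m : ℕ, ψ 1 ^ (m : ℤ) + ψ 1 ^ (-(m : ℤ)) = ψ m + ψ (-m) := fun m => by
    simp only [addChar_one_zpow, Int.cast_neg, Int.cast_natCast]
  refine ⟨?_, ?_, ?_⟩ <;> rw [heig]
  · rw [← shift_add_shift_eq_smul hψ _ (1, 0, 0) _ fun p hp => by
      simpa [tripleDot] using (hsign p hp).1]
    funext ⟨a, b, c⟩
    simp [Aop1]
  · rw [← shift_add_shift_eq_smul hψ _ (0, 1, 0) _ fun p hp => by
      simpa [tripleDot] using (hsign p hp).2.1]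
    funext ⟨a, b, c⟩
    simp [Aop2]
  · rw [← shift_add_shift_eq_smul hψ _ (0, 0, 1) _ fun p hp => by
      simpa [tripleDot] using (hsign p hp).2.2]
    funext ⟨a, b, c⟩
    simp [Aop3]

end QBasis

/-- the nonzero functions `Q_{h,i,j}` (for `h,i,j ∈ {0,…,D}`) form a
basis of `Fix(Aut)`, and each `Q_{h,i,j}` is a common eigenvector of the operators
`A^{(1)}, A^{(2)}, A^{(3)}` with eigenvalues `ζ^h + ζ^{-h}`, `ζ^i + ζ^{-i}`,
`ζ^j + ζ^{-j}` respectively. -/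
theorem stmt_15 (D n : ℕ) (hD : 2 ≤ D) (hn : n = 2 * D ∨ n = 2 * D + 1) [NeZero n]
    (ζ : ℂ) (hζ : ζ = Complex.exp (2 * Real.pi * Complex.I / n)) :
    (LinearIndependent ℂ (fun f : {f : ZMod n × ZMod n × ZMod n → ℂ //
        (∃ h i j : ℕ, h ≤ D ∧ i ≤ D ∧ j ≤ D ∧ f = Qfun D n ζ h i j) ∧ f ≠ 0} => f.1)
      ∧ Submodule.span ℂ {f : ZMod n × ZMod n × ZMod n → ℂ |
          (∃ h i j : ℕ, h ≤ D ∧ i ≤ D ∧ j ≤ D ∧ f = Qfun D n ζ h i j) ∧ f ≠ 0}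
        = fixSubmodule n)
    ∧ (∀ h i j : ℕ, h ≤ D → i ≤ D → j ≤ D →
        Aop1 n (Qfun D n ζ h i j) = (ζ ^ (h : ℤ) + ζ ^ (-(h : ℤ))) • Qfun D n ζ h i j
        ∧ Aop2 n (Qfun D n ζ h i j) = (ζ ^ (i : ℤ) + ζ ^ (-(i : ℤ))) • Qfun D n ζ h i j
        ∧ Aop3 n (Qfun D n ζ h i j) = (ζ ^ (j : ℤ) + ζ ^ (-(j : ℤ))) • Qfun D n ζ h i j) := by
  have hψ := ZMod.isPrimitive_stdAddChar n
  have hζψ : ζ = ZMod.stdAddChar (1 : ZMod n) := by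
    simpa [hζ, mul_div_assoc] using (ZMod.stdAddChar_coe (N := n) 1).symm
  have h2 : (2 : ZMod n) ≠ 0 := by
    intro h
    have h2n : ((2 : ℕ) : ZMod n) = 0 := by exact_mod_cast h
    rw [ZMod.natCast_eq_zero_iff] at h2n
    have := Nat.le_of_dvd two_pos h2n
    omega
  subst hζψ
  exact ⟨⟨linearIndependent_nonzeroQfuns hψ hn, span_nonzeroQfuns hψ hn h2⟩,
    fun h i j hh hi hj => Aop_Qfun_eq_smul hψ hn hh hi hj⟩
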